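/- Under these hypotheses, the 2ⁿ vectors (Π_{i∈S} Bᵢ) ψ, indexed by the subsets S ⊆ {1,…,n}, are linearly independent in H; in particular, any Hilbert space supporting a state and observables that maximally violate the inequality Iₙ has dimension at least 2ⁿ. -/

import Mathlib

/-!
The vectors `(Π_{i∈S} Bᵢ)ψ` are orthonormal. With `φ = (Π_i Bᵢ)ψ`, the relations for `Iₙ`
give `BᵢAᵢψ = φ` and, by cancelling a third index in a triple relation,
`AᵢBᵢAⱼBⱼψ = -ψ` for `i ≠ j`, hence `AⱼBⱼψ = -φ` for every `j`. Consequently, for `i ∈ U`,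
`Aᵢ` maps `B_Uψ` to `-B_{({i} ∆ U)ᶜ}ψ`, whereas it maps `ψ` to `B_{{i}ᶜ}ψ`; since `Aᵢ` is a
self-adjoint involution this forces `⟨ψ, B_Uψ⟩ = -⟨ψ, B_Uψ⟩ = 0` for every nonempty `U`.
As `⟨B_Sψ, B_Tψ⟩ = ⟨ψ, B_{S ∆ T}ψ⟩`, the family is orthonormal.
-/

/-- The product `Π_{i ∈ S} T i` of the operators `T i`, `i ∈ S`, multiplied in
increasing order of the index; all products used below are over pairwise commuting
operators, so the order of the factors is irrelevant. -/
noncomputable def prodOver {H : Type*} [NormedAddCommGroup H] [InnerProductSpace ℂ H]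
    {n : ℕ} (T : Fin n → H →L[ℂ] H) (S : Finset (Fin n)) : H →L[ℂ] H :=
  ((S.sort (· ≤ ·)).map T).prod

open Finset
open scoped symmDiff

section prodOver

variable {H : Type*} [NormedAddCommGroup H] [InnerProductSpace ℂ H] {n : ℕ}
  {T : Fin n → H →L[ℂ] H}

lemma commute_of_forall_apply_comm (hTT : ∀ i j, i ≠ j → ∀ x, T i (T j x) = T j (T i x))
    (i j : Fin n) : Commute (T i) (T j) := by
  rcases eq_or_ne i j with rfl | hij
  · exact Commute.refl _
  · exact ContinuousLinearMap.ext (hTT i j hij)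

lemma prodOver_empty : prodOver T ∅ = 1 := by
  simp [prodOver]

lemma prodOver_singleton (a : Fin n) : prodOver T {a} = T a := by
  simp [prodOver]

lemma prodOver_insert_apply (hTT : ∀ i j, i ≠ j → ∀ x, T i (T j x) = T j (T i x))
    {a : Fin n} {S : Finset (Fin n)} (ha : a ∉ S) (x : H) :
    prodOver T (insert a S) x = T a (prodOver T S x) := by
  have hperm : (a :: S.sort (· ≤ ·)).Perm ((insert a S).sort (· ≤ ·)) := by
    rw [← Multiset.coe_eq_coe, sort_eq, insert_val_of_notMem ha, ← Multiset.cons_coe,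
      sort_eq]
  have hcomm : ((a :: S.sort (· ≤ ·)).map T).Pairwise Commute :=
    List.pairwise_map.2 (List.pairwise_of_forall (commute_of_forall_apply_comm hTT))
  simp [prodOver, ← (hperm.map T).prod_eq' hcomm]

lemma prodOver_apply_comm (hTT : ∀ i j, i ≠ j → ∀ x, T i (T j x) = T j (T i x))
    {S : Finset (Fin n)} {C : H →L[ℂ] H} (hC : ∀ j ∈ S, ∀ x, C (T j x) = T j (C x)) (x : H) :
    C (prodOver T S x) = prodOver T S (C x) := by
  induction S using Finset.induction_on with
  | empty => simp [prodOver_empty]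
  | insert a S ha ih =>
    rw [prodOver_insert_apply hTT ha, prodOver_insert_apply hTT ha, hC a (mem_insert_self a S),
      ih fun j hj => hC j (mem_insert_of_mem hj)]

lemma apply_prodOver_apply (hTT : ∀ i j, i ≠ j → ∀ x, T i (T j x) = T j (T i x))
    (hinv : ∀ i x, T i (T i x) = x) (a : Fin n) (V : Finset (Fin n)) (x : H) :
    T a (prodOver T V x) = prodOver T ({a} ∆ V) x := by
  by_cases ha : a ∈ V
  · rw [symmDiff_of_le (singleton_subset_iff.2 ha), sdiff_singleton_eq_erase]
    conv_lhs => rw [← insert_erase ha, prodOver_insert_apply hTT (notMem_erase a V), hinv]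
  · rw [(disjoint_singleton_left.2 ha).symmDiff_eq_sup, sup_eq_union, ← insert_eq,
      prodOver_insert_apply hTT ha]

lemma prodOver_prodOver_apply (hTT : ∀ i j, i ≠ j → ∀ x, T i (T j x) = T j (T i x))
    (hinv : ∀ i x, T i (T i x) = x) (S U : Finset (Fin n)) (x : H) :
    prodOver T S (prodOver T U x) = prodOver T (S ∆ U) x := by
  induction S using Finset.induction_on with
  | empty => rw [prodOver_empty, ← bot_eq_empty, bot_symmDiff]; rfl
  | insert a S ha ih =>
    rw [prodOver_insert_apply hTT ha, ih, apply_prodOver_apply hTT hinv, ← symmDiff_assoc,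
      insert_eq, ← sup_eq_union, (disjoint_singleton_left.2 ha).symmDiff_eq_sup]

lemma prodOver_compl_apply (hTT : ∀ i j, i ≠ j → ∀ x, T i (T j x) = T j (T i x))
    (hinv : ∀ i x, T i (T i x) = x) (S : Finset (Fin n)) (x : H) :
    prodOver T Sᶜ x = prodOver T S (prodOver T univ x) := by
  rw [prodOver_prodOver_apply hTT hinv, ← top_eq_univ, symmDiff_top]
  rfl

lemma inner_prodOver_apply (hTT : ∀ i j, i ≠ j → ∀ x, T i (T j x) = T j (T i x))
    (hsa : ∀ i (x y : H), inner ℂ (T i x) y = inner ℂ x (T i y)) (S : Finset (Fin n)) (x y : H) :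
    inner ℂ (prodOver T S x) y = inner ℂ x (prodOver T S y) := by
  induction S using Finset.induction_on generalizing x y with
  | empty => simp [prodOver_empty]
  | insert a S ha ih =>
    rw [prodOver_insert_apply hTT ha, prodOver_insert_apply hTT ha, hsa, ih,
      prodOver_apply_comm hTT fun j hj => hTT a j (ne_of_mem_of_not_mem hj ha).symm]

end prodOver

lemma LinearIndependent.two_pow_le_rank {K M : Type*} [Ring K] [Nontrivial K] [AddCommGroup M]
    [Module K M] {n : ℕ} {v : Finset (Fin n) → M} (hv : LinearIndependent K v) :
    (2 ^ n : Cardinal) ≤ Module.rank K M := by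
  have := hv.cardinal_lift_le_rank
  rw [Cardinal.mk_fintype, Fintype.card_finset, Fintype.card_fin, Cardinal.lift_natCast,
    Cardinal.lift_uzero] at this
  exact_mod_cast this

namespace MaxViolation

variable {H : Type*} [NormedAddCommGroup H] [InnerProductSpace ℂ H] {n : ℕ}
  {A B : Fin n → H →L[ℂ] H} {ψ : H}

lemma prodOver_univ_erase_apply (hAinv : ∀ i (x : H), A i (A i x) = x)
    (hplus : ∀ i, A i (prodOver B (univ.erase i) ψ) = ψ) (i : Fin n) :
    prodOver B (univ.erase i) ψ = A i ψ := by
  rw [← hAinv i (prodOver B (univ.erase i) ψ), hplus]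

lemma B_A_apply (hAinv : ∀ i (x : H), A i (A i x) = x)
    (hBB : ∀ i j, i ≠ j → ∀ x : H, B i (B j x) = B j (B i x))
    (hplus : ∀ i, A i (prodOver B (univ.erase i) ψ) = ψ) (i : Fin n) :
    B i (A i ψ) = prodOver B univ ψ := by
  rw [← prodOver_univ_erase_apply hAinv hplus, ← prodOver_insert_apply hBB (notMem_erase i univ),
    insert_erase (mem_univ i)]

lemma A_B_apply_prodOver_univ (hAinv : ∀ i (x : H), A i (A i x) = x)
    (hBinv : ∀ i (x : H), B i (B i x) = x)
    (hBB : ∀ i j, i ≠ j → ∀ x : H, B i (B j x) = B j (B i x))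
    (hplus : ∀ i, A i (prodOver B (univ.erase i) ψ) = ψ) (i : Fin n) :
    A i (B i (prodOver B univ ψ)) = ψ := by
  rw [← B_A_apply hAinv hBB hplus i, hBinv, hAinv]

lemma A_B_A_B_apply (hn : 3 ≤ n) (hAinv : ∀ i (x : H), A i (A i x) = x)
    (hBinv : ∀ i (x : H), B i (B i x) = x)
    (hAA : ∀ i j, i ≠ j → ∀ x : H, A i (A j x) = A j (A i x))
    (hAB : ∀ i j, i ≠ j → ∀ x : H, A i (B j x) = B j (A i x))
    (hBB : ∀ i j, i ≠ j → ∀ x : H, B i (B j x) = B j (B i x))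
    (hplus : ∀ i, A i (prodOver B (univ.erase i) ψ) = ψ)
    (hminus : ∀ S : Finset (Fin n), S.card = 3 → prodOver A S (prodOver B Sᶜ ψ) = -ψ)
    {i j : Fin n} (hij : i ≠ j) :
    A i (B i (A j (B j ψ))) = -ψ := by
  obtain ⟨k, hki, hkj⟩ := Fin.exists_ne_and_ne_of_two_lt i j hn
  have hi : i ∉ ({j, k} : Finset (Fin n)) := by simp [hij, hki.symm]
  have hj : j ∉ ({k} : Finset (Fin n)) := by simp [hkj.symm]
  have h := hminus {i, j, k} (card_eq_three.2 ⟨i, j, k, hij, hki.symm, hkj.symm, rfl⟩)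
  rw [prodOver_compl_apply hBB hBinv, prodOver_insert_apply hAA hi, prodOver_insert_apply hAA hj,
    prodOver_singleton, prodOver_insert_apply hBB hi, prodOver_insert_apply hBB hj,
    prodOver_singleton, hAB k i hki, hAB k j hkj, A_B_apply_prodOver_univ hAinv hBinv hBB hplus,
    hAB j i hij.symm] at h
  exact h

lemma A_B_apply (hn : 3 ≤ n) (hAinv : ∀ i (x : H), A i (A i x) = x)
    (hBinv : ∀ i (x : H), B i (B i x) = x)
    (hAA : ∀ i j, i ≠ j → ∀ x : H, A i (A j x) = A j (A i x))
    (hAB : ∀ i j, i ≠ j → ∀ x : H, A i (B j x) = B j (A i x))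
    (hBB : ∀ i j, i ≠ j → ∀ x : H, B i (B j x) = B j (B i x))
    (hplus : ∀ i, A i (prodOver B (univ.erase i) ψ) = ψ)
    (hminus : ∀ S : Finset (Fin n), S.card = 3 → prodOver A S (prodOver B Sᶜ ψ) = -ψ)
    (j : Fin n) :
    A j (B j ψ) = -prodOver B univ ψ := by
  obtain ⟨i, hij, -⟩ := Fin.exists_ne_and_ne_of_two_lt j j hn
  calc A j (B j ψ) = B i (A i (A i (B i (A j (B j ψ))))) := by rw [hAinv, hBinv]
    _ = -prodOver B univ ψ := by
      rw [A_B_A_B_apply hn hAinv hBinv hAA hAB hBB hplus hminus hij, map_neg, map_neg,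
        B_A_apply hAinv hBB hplus]

lemma A_apply_prodOver_of_mem (hn : 3 ≤ n) (hAinv : ∀ i (x : H), A i (A i x) = x)
    (hBinv : ∀ i (x : H), B i (B i x) = x)
    (hAA : ∀ i j, i ≠ j → ∀ x : H, A i (A j x) = A j (A i x))
    (hAB : ∀ i j, i ≠ j → ∀ x : H, A i (B j x) = B j (A i x))
    (hBB : ∀ i j, i ≠ j → ∀ x : H, B i (B j x) = B j (B i x))
    (hplus : ∀ i, A i (prodOver B (univ.erase i) ψ) = ψ)
    (hminus : ∀ S : Finset (Fin n), S.card = 3 → prodOver A S (prodOver B Sᶜ ψ) = -ψ)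
    {U : Finset (Fin n)} {i : Fin n} (hi : i ∈ U) :
    A i (prodOver B U ψ) = -prodOver B ({i} ∆ U)ᶜ ψ := by
  have hU : prodOver B U ψ = prodOver B ({i} ∆ U) (B i ψ) := by
    rw [← prodOver_singleton (T := B) i, prodOver_prodOver_apply hBB hBinv,
      symmDiff_symmDiff_self']
  have hiU : i ∉ {i} ∆ U := by simp [mem_symmDiff, hi]
  rw [hU, prodOver_apply_comm hBB fun j hj => hAB i j (ne_of_mem_of_not_mem hj hiU).symm,
    A_B_apply hn hAinv hBinv hAA hAB hBB hplus hminus, map_neg,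
    ← prodOver_compl_apply hBB hBinv]

lemma inner_prodOver_eq_zero (hn : 3 ≤ n)
    (hAsa : ∀ i (x y : H), inner ℂ (A i x) y = inner ℂ x (A i y))
    (hBsa : ∀ i (x y : H), inner ℂ (B i x) y = inner ℂ x (B i y))
    (hAinv : ∀ i (x : H), A i (A i x) = x)
    (hBinv : ∀ i (x : H), B i (B i x) = x)
    (hAA : ∀ i j, i ≠ j → ∀ x : H, A i (A j x) = A j (A i x))
    (hAB : ∀ i j, i ≠ j → ∀ x : H, A i (B j x) = B j (A i x))
    (hBB : ∀ i j, i ≠ j → ∀ x : H, B i (B j x) = B j (B i x))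
    (hplus : ∀ i, A i (prodOver B (univ.erase i) ψ) = ψ)
    (hminus : ∀ S : Finset (Fin n), S.card = 3 → prodOver A S (prodOver B Sᶜ ψ) = -ψ)
    {U : Finset (Fin n)} (hU : U.Nonempty) :
    inner ℂ ψ (prodOver B U ψ) = 0 := by
  obtain ⟨i, hi⟩ := hU
  have hAψ : A i ψ = prodOver B {i}ᶜ ψ := by
    rw [compl_singleton, prodOver_univ_erase_apply hAinv hplus]
  refine self_eq_neg.1 ?_
  calc inner ℂ ψ (prodOver B U ψ) = inner ℂ (A i ψ) (A i (prodOver B U ψ)) := by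
        rw [hAsa, hAinv]
    _ = -inner ℂ (prodOver B {i}ᶜ ψ) (prodOver B ({i} ∆ U)ᶜ ψ) := by
        rw [hAψ, A_apply_prodOver_of_mem hn hAinv hBinv hAA hAB hBB hplus hminus hi,
          inner_neg_right]
    _ = -inner ℂ ψ (prodOver B U ψ) := by
        rw [inner_prodOver_apply hBB hBsa, prodOver_prodOver_apply hBB hBinv,
          compl_symmDiff_compl, symmDiff_symmDiff_cancel_left]

lemma orthonormal_prodOver (hn : 3 ≤ n)
    (hAsa : ∀ i (x y : H), inner ℂ (A i x) y = inner ℂ x (A i y))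
    (hBsa : ∀ i (x y : H), inner ℂ (B i x) y = inner ℂ x (B i y))
    (hAinv : ∀ i (x : H), A i (A i x) = x)
    (hBinv : ∀ i (x : H), B i (B i x) = x)
    (hAA : ∀ i j, i ≠ j → ∀ x : H, A i (A j x) = A j (A i x))
    (hAB : ∀ i j, i ≠ j → ∀ x : H, A i (B j x) = B j (A i x))
    (hBB : ∀ i j, i ≠ j → ∀ x : H, B i (B j x) = B j (B i x))
    (hψ : ‖ψ‖ = 1)
    (hplus : ∀ i, A i (prodOver B (univ.erase i) ψ) = ψ)
    (hminus : ∀ S : Finset (Fin n), S.card = 3 → prodOver A S (prodOver B Sᶜ ψ) = -ψ) :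
    Orthonormal ℂ fun S : Finset (Fin n) => prodOver B S ψ := by
  rw [orthonormal_iff_ite]
  intro S U
  rw [inner_prodOver_apply hBB hBsa, prodOver_prodOver_apply hBB hBinv]
  split_ifs with hSU
  · simp [hSU, prodOver_empty, inner_self_eq_norm_sq_to_K, hψ]
  · exact inner_prodOver_eq_zero hn hAsa hBsa hAinv hBinv hAA hAB hBB hplus hminus
      (nonempty_iff_ne_empty.2 fun h => hSU (symmDiff_eq_bot.1 h))

end MaxViolation

/-- under the maximal-violation hypotheses for `Iₙ` (setup as in
Statement 9), the `2ⁿ` vectors `(Π_{i∈S} Bᵢ)ψ`, indexed by the subsets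
`S ⊆ {1,…,n}`, are linearly independent in `H`; in particular any Hilbert space
supporting a state and observables maximally violating `Iₙ` has dimension at
least `2ⁿ`. -/
theorem stmt14 {H : Type*} [NormedAddCommGroup H] [InnerProductSpace ℂ H]
    (n : ℕ) (hn : 3 ≤ n)
    (A B : Fin n → H →L[ℂ] H)
    (hAsa : ∀ i (x y : H), (inner ℂ (A i x) y : ℂ) = inner ℂ x (A i y))
    (hBsa : ∀ i (x y : H), (inner ℂ (B i x) y : ℂ) = inner ℂ x (B i y))
    (hAinv : ∀ i (x : H), A i (A i x) = x)
    (hBinv : ∀ i (x : H), B i (B i x) = x)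
    (hAA : ∀ i j, i ≠ j → ∀ x : H, A i (A j x) = A j (A i x))
    (hAB : ∀ i j, i ≠ j → ∀ x : H, A i (B j x) = B j (A i x))
    (hBB : ∀ i j, i ≠ j → ∀ x : H, B i (B j x) = B j (B i x))
    (ψ : H) (hψ : ‖ψ‖ = 1)
    (hplus : ∀ i, A i (prodOver B (Finset.univ.erase i) ψ) = ψ)
    (hminus : ∀ S : Finset (Fin n), S.card = 3 →
      prodOver A S (prodOver B Sᶜ ψ) = -ψ) :
    LinearIndependent ℂ (fun S : Finset (Fin n) => prodOver B S ψ) ∧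
    (2 ^ n : Cardinal) ≤ Module.rank ℂ H := by
  have hON := MaxViolation.orthonormal_prodOver hn hAsa hBsa hAinv hBinv hAA hAB hBB hψ hplus
    hminus
  exact ⟨hON.linearIndependent, hON.linearIndependent.two_pow_le_rank⟩
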